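/- arXiv:1403.0126 — 2 statements merged into one kernel-verified Lean document; each statement's English description precedes it below -/
import Mathlib

section
/- Let E be an elliptic curve over F_q and let P ∈ E(F_{q^5}) satisfy P + φ(P) + φ²(P) − φ³(P) − φ⁴(P) = O. Then 2P = O, and consequently P + φ(P) + φ²(P) + φ³(P) + φ⁴(P) = O, i.e. P lies in the trace zero subgroup T_5. -/
/-!
Write `F` for the map induced by `φ` on points and `S = P + FP + F²P - F³P - F⁴P = 0`.
Since `F⁵ = 1`, applying `F` to `S` gives `FP + F²P + F³P - F⁴P - P = 0`, and subtracting
shows that `Q = 2P` is fixed by `F³`. As `gcd 3 5 = 1`, `Q` is fixed by `F` itself, so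
`2 FⁱP = 2P` for every `i` and doubling `S` gives `2P = 0`. The trace is then
`S + 2F³P + 2F⁴P = 0`.
-/

open WeierstrassCurve.Affine Function

namespace AddMonoidHom

variable {G : Type*} [AddCommGroup G] {f : G →+ G} {P : G}

theorem isFixedPt_two_nsmul_of_add_add_sub_sub_eq_zero (hf : ∀ x, IsPeriodicPt f 5 x)
    (h : P + f^[1] P + f^[2] P - f^[3] P - f^[4] P = 0) : IsFixedPt f ((2 : ℕ) • P) := by
  have hshift : f^[1] P + f^[2] P + f^[3] P - f^[4] P - P = 0 := by
    have := congrArg f h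
    simp only [map_add, map_sub, map_zero, ← iterate_succ_apply' f] at this
    rwa [(hf P).eq] at this
  have hfix3 : IsPeriodicPt f 3 ((2 : ℕ) • P) := by
    have hdiff : (2 : ℕ) • P - (2 : ℕ) • f^[3] P = (P + f^[1] P + f^[2] P - f^[3] P - f^[4] P) -
        (f^[1] P + f^[2] P + f^[3] P - f^[4] P - P) := by
      abel
    rw [h, hshift, sub_zero, sub_eq_zero] at hdiff
    rw [IsPeriodicPt, IsFixedPt, iterate_map_nsmul, hdiff]
  simpa [IsPeriodicPt] using hfix3.gcd (hf _)

theorem two_nsmul_iterate_eq_of_add_add_sub_sub_eq_zero (hf : ∀ x, IsPeriodicPt f 5 x)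
    (h : P + f^[1] P + f^[2] P - f^[3] P - f^[4] P = 0) (n : ℕ) :
    (2 : ℕ) • f^[n] P = (2 : ℕ) • P := by
  rw [← iterate_map_nsmul, ((isFixedPt_two_nsmul_of_add_add_sub_sub_eq_zero hf h).iterate n).eq]

theorem two_nsmul_eq_zero_of_add_add_sub_sub_eq_zero (hf : ∀ x, IsPeriodicPt f 5 x)
    (h : P + f^[1] P + f^[2] P - f^[3] P - f^[4] P = 0) : (2 : ℕ) • P = 0 := by
  have := congrArg ((2 : ℕ) • ·) h
  simp only [smul_add, smul_sub, smul_zero,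
    two_nsmul_iterate_eq_of_add_add_sub_sub_eq_zero hf h] at this
  rwa [add_sub_cancel_right, add_sub_cancel_right] at this

theorem add_add_add_add_eq_zero_of_add_add_sub_sub_eq_zero (hf : ∀ x, IsPeriodicPt f 5 x)
    (h : P + f^[1] P + f^[2] P - f^[3] P - f^[4] P = 0) :
    P + f^[1] P + f^[2] P + f^[3] P + f^[4] P = 0 := by
  have h2 n : (2 : ℕ) • f^[n] P = 0 := by
    rw [two_nsmul_iterate_eq_of_add_add_sub_sub_eq_zero hf h,
      two_nsmul_eq_zero_of_add_add_sub_sub_eq_zero hf h]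
  calc P + f^[1] P + f^[2] P + f^[3] P + f^[4] P
      = (P + f^[1] P + f^[2] P - f^[3] P - f^[4] P) + (2 : ℕ) • f^[3] P + (2 : ℕ) • f^[4] P := by
        abel
    _ = 0 := by rw [h, h2, h2, zero_add, add_zero]

end AddMonoidHom

theorem AlgHom.pow_eq_one_of_apply_eq_pow_card {Fq K : Type*} [Field Fq] [Fintype Fq] [Field K]
    [Fintype K] [Algebra Fq K] {n : ℕ} (hcard : Fintype.card K = Fintype.card Fq ^ n)
    {φ : K →ₐ[Fq] K} (hφ : ∀ x : K, φ x = x ^ Fintype.card Fq) : φ ^ n = 1 := by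
  have hφ' : ⇑φ = (· ^ Fintype.card Fq) := funext hφ
  ext x
  rw [coe_pow, hφ', pow_iterate, ← hcard]
  exact FiniteField.pow_card x

namespace WeierstrassCurve.Affine.Point

variable {R S K : Type*} [CommRing R] [CommRing S] [Field K] [Algebra R S] [Algebra R K]
  [Algebra S K] [IsScalarTower R S K] [DecidableEq K] {W' : WeierstrassCurve.Affine R}

theorem map_one (P : (W'⁄K).Point) : map (W' := W') (1 : K →ₐ[S] K) P = P := by
  cases P <;> rfl

theorem iterate_map (f : K →ₐ[S] K) (n : ℕ) (P : (W'⁄K).Point) :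
    (⇑(map (W' := W') f))^[n] P = map (f ^ n) P := by
  induction n with
  | zero => exact (map_one P).symm
  | succ n ih => rw [iterate_succ_apply', ih, map_map, pow_succ']; rfl

end WeierstrassCurve.Affine.Point

open Classical in
theorem two_smul_eq_zero_of_two_minuses_in_a_row_quintic_general
    {Fq K : Type*} [Field Fq] [Fintype Fq] [Field K] [Fintype K] [Algebra Fq K]
    (hcard : Fintype.card K = Fintype.card Fq ^ 5)
    (W : WeierstrassCurve.Affine Fq)
    (φ : K →ₐ[Fq] K) (hφ : ∀ x : K, φ x = x ^ Fintype.card Fq)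
    (P : (W⁄K).Point)
    (h : P + (⇑(Point.map (W' := W) φ))^[1] P + (⇑(Point.map (W' := W) φ))^[2] P -
        (⇑(Point.map (W' := W) φ))^[3] P - (⇑(Point.map (W' := W) φ))^[4] P = 0) :
    (2 : ℕ) • P = 0 ∧
      P + (⇑(Point.map (W' := W) φ))^[1] P + (⇑(Point.map (W' := W) φ))^[2] P +
        (⇑(Point.map (W' := W) φ))^[3] P + (⇑(Point.map (W' := W) φ))^[4] P = 0 := by
  have hper (Q : (W⁄K).Point) : IsPeriodicPt (Point.map (W' := W) φ) 5 Q := by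
    rw [IsPeriodicPt, IsFixedPt, Point.iterate_map,
      AlgHom.pow_eq_one_of_apply_eq_pow_card hcard hφ]
    exact Point.map_one Q
  exact ⟨AddMonoidHom.two_nsmul_eq_zero_of_add_add_sub_sub_eq_zero hper h,
    AddMonoidHom.add_add_add_add_eq_zero_of_add_add_sub_sub_eq_zero hper h⟩

open Classical in
/-- Let `E` be an elliptic curve over `F_q` and `P ∈ E(F_{q⁵})` with
`P + φ(P) + φ²(P) − φ³(P) − φ⁴(P) = O`. Then `2P = O`, and consequently
`P + φ(P) + φ²(P) + φ³(P) + φ⁴(P) = O`, i.e. `P ∈ T_5`. -/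
theorem two_smul_eq_zero_of_two_minuses_in_a_row_quintic
    {Fq K : Type*} [Field Fq] [Fintype Fq] [Field K] [Fintype K] [Algebra Fq K]
    (hcard : Fintype.card K = Fintype.card Fq ^ 5)
    (W : WeierstrassCurve.Affine Fq) (hΔ : W.Δ ≠ 0)
    (φ : K →ₐ[Fq] K) (hφ : ∀ x : K, φ x = x ^ Fintype.card Fq)
    (P : (W⁄K).Point)
    (h : P + (⇑(Point.map (W' := W) φ))^[1] P + (⇑(Point.map (W' := W) φ))^[2] P -
        (⇑(Point.map (W' := W) φ))^[3] P - (⇑(Point.map (W' := W) φ))^[4] P = 0) :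
    (2 : ℕ) • P = 0 ∧
      P + (⇑(Point.map (W' := W) φ))^[1] P + (⇑(Point.map (W' := W) φ))^[2] P +
        (⇑(Point.map (W' := W) φ))^[3] P + (⇑(Point.map (W' := W) φ))^[4] P = 0 :=
  two_smul_eq_zero_of_two_minuses_in_a_row_quintic_general hcard W φ hφ P h
end

section
/- Let K be an algebraically closed field of characteristic different from 2 and 3, let A, B ∈ K with 4A³ + 27B² ≠ 0, and let E : y² = x³ + Ax + B be the corresponding elliptic curve with neutral element O. For any Z_1, Z_2, Z_3 ∈ K, one has f_3(Z_1, Z_2, Z_3) = 0 if and only if there exist Y_1, Y_2, Y_3 ∈ K such that Y_i² = Z_i³ + A Z_i + B for i = 1,2,3 and (Z_1, Y_1) + (Z_2, Y_2) + (Z_3, Y_3) = O in the group E(K). -/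
open WeierstrassCurve.Affine

/-- The third Semaev polynomial of the elliptic curve `y² = x³ + Ax + B`. -/
def semaev3 {R : Type*} [CommRing R] (A B z₁ z₂ z₃ : R) : R :=
  (z₁ - z₂) ^ 2 * z₃ ^ 2 - 2 * ((z₁ + z₂) * (z₁ * z₂ + A) + 2 * B) * z₃ +
    (z₁ * z₂ - A) ^ 2 - 4 * B * (z₁ + z₂)

/-! When `x₁ ≠ x₂`, the identity
`(x₁ - x₂)² f₃ = ((x₁ - x₂)² (x₃ + x₁ + x₂) - (y₁ - y₂)²) ((x₁ - x₂)² (x₃ + x₁ + x₂) - (y₁ + y₂)²)`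
together with the chord formula `x(P₁ + P₂) = ℓ² - x₁ - x₂` shows that the roots of `f₃(x₁, x₂, ·)`
are the abscissae of `P₁ + P₂` and `P₁ - P₂`; when `x₁ = x₂` it degenerates to the linear polynomial
`(3x₁² + A)² - 4y₁² (x₃ + 2x₁)`, whose root is the abscissa of `2P₁`. Since `P₁ + P₂ + P₃ = O` means
`P₃ = -(P₁ + P₂)`, which has the same abscissa as `P₁ + P₂`, and every `x ∈ K` is the abscissa of a
point when `K` is algebraically closed, both directions follow. -/

lemma sq_sub_mul_semaev3 {R : Type*} [CommRing R] {A B x₁ x₂ y₁ y₂ : R} (x₃ : R)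
    (h₁ : y₁ ^ 2 = x₁ ^ 3 + A * x₁ + B) (h₂ : y₂ ^ 2 = x₂ ^ 3 + A * x₂ + B) :
    (x₁ - x₂) ^ 2 * semaev3 A B x₁ x₂ x₃ =
      ((x₁ - x₂) ^ 2 * (x₃ + x₁ + x₂) - (y₁ - y₂) ^ 2) *
        ((x₁ - x₂) ^ 2 * (x₃ + x₁ + x₂) - (y₁ + y₂) ^ 2) := by
  unfold semaev3
  linear_combination
    (2 * (x₁ - x₂) ^ 2 * (x₃ + x₁ + x₂) -
      (y₁ ^ 2 - y₂ ^ 2 + (x₁ ^ 3 + A * x₁ + B) - (x₂ ^ 3 + A * x₂ + B))) * h₁ +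
    (2 * (x₁ - x₂) ^ 2 * (x₃ + x₁ + x₂) +
      (y₁ ^ 2 - y₂ ^ 2 + (x₁ ^ 3 + A * x₁ + B) - (x₂ ^ 3 + A * x₂ + B))) * h₂

lemma semaev3_self {R : Type*} [CommRing R] {A B x₁ y₁ : R} (x₃ : R)
    (h₁ : y₁ ^ 2 = x₁ ^ 3 + A * x₁ + B) :
    semaev3 A B x₁ x₁ x₃ = (3 * x₁ ^ 2 + A) ^ 2 - 4 * y₁ ^ 2 * (x₃ + 2 * x₁) := by
  unfold semaev3
  linear_combination (4 * (x₃ + 2 * x₁)) * h₁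

namespace WeierstrassCurve.Affine

variable {F : Type*} [Field F]

lemma Point.some_add_some_add_some_eq_zero_iff [DecidableEq F] {W : Affine F}
    {x₁ x₂ x₃ y₁ y₂ y₃ : F} {h₁ : W.Nonsingular x₁ y₁} {h₂ : W.Nonsingular x₂ y₂}
    {h₃ : W.Nonsingular x₃ y₃} :
    some _ _ h₁ + some _ _ h₂ + some _ _ h₃ = 0 ↔ ¬(x₁ = x₂ ∧ y₁ = W.negY x₂ y₂) ∧
      x₃ = W.addX x₁ x₂ (W.slope x₁ x₂ y₁ y₂) ∧ y₃ = W.negAddY x₁ x₂ y₁ (W.slope x₁ x₂ y₁ y₂) := by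
  rw [add_eq_zero_iff_eq_neg, neg_some]
  by_cases hxy : x₁ = x₂ ∧ y₁ = W.negY x₂ y₂
  · rw [add_of_Y_eq hxy.1 hxy.2]
    exact iff_of_false (some_ne_zero _).symm fun h => h.1 hxy
  · rw [add_some hxy, some.injEq, addY]
    refine ⟨fun ⟨hx, hy⟩ => ⟨hxy, hx.symm, ?_⟩, fun ⟨_, hx, hy⟩ => ⟨hx.symm, by rw [hx, hy]⟩⟩
    subst hx
    rw [← negY_negY _ y₃, ← hy, negY_negY]

variable {W : Affine F} [W.IsShortNF] {x₁ x₂ x₃ y₁ y₂ : F}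

lemma equation_iff_of_isShortNF (x y : F) :
    W.Equation x y ↔ y ^ 2 = x ^ 3 + W.a₄ * x + W.a₆ := by
  simp [equation_iff]

lemma negY_of_isShortNF (x y : F) : W.negY x y = -y := by
  simp

lemma addX_of_isShortNF (x₁ x₂ ℓ : F) : W.addX x₁ x₂ ℓ = ℓ ^ 2 - x₁ - x₂ := by
  simp

lemma exists_nonsingular_of_isShortNF [IsAlgClosed F] (hΔ : W.Δ ≠ 0) (x : F) :
    ∃ y, W.Nonsingular x y := by
  obtain ⟨y, hy⟩ := IsAlgClosed.exists_pow_nat_eq (x ^ 3 + W.a₄ * x + W.a₆) two_pos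
  exact ⟨y, (equation_iff_nonsingular_of_Δ_ne_zero hΔ).1 ((equation_iff_of_isShortNF _ _).2 hy)⟩

variable [DecidableEq F]

lemma slope_self_of_isShortNF (hy : y₁ ≠ W.negY x₁ y₁) :
    W.slope x₁ x₁ y₁ y₁ = (3 * x₁ ^ 2 + W.a₄) / (2 * y₁) := by
  rw [slope_of_Y_ne rfl hy, negY_of_isShortNF, a₁_of_isShortNF, a₂_of_isShortNF]
  ring

lemma semaev3_eq_zero_iff_of_X_ne (h₁ : W.Equation x₁ y₁) (h₂ : W.Equation x₂ y₂)
    (hx : x₁ ≠ x₂) :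
    semaev3 W.a₄ W.a₆ x₁ x₂ x₃ = 0 ↔ x₃ = W.addX x₁ x₂ (W.slope x₁ x₂ y₁ y₂) ∨
      x₃ = W.addX x₁ x₂ (W.slope x₁ x₂ y₁ (W.negY x₂ y₂)) := by
  rw [equation_iff_of_isShortNF] at h₁ h₂
  have hx' : x₁ - x₂ ≠ 0 := sub_ne_zero.2 hx
  rw [← mul_right_inj' (pow_ne_zero 2 hx'), mul_zero, sq_sub_mul_semaev3 x₃ h₁ h₂, mul_eq_zero,
    negY_of_isShortNF, addX_of_isShortNF, addX_of_isShortNF, slope_of_X_ne hx, slope_of_X_ne hx,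
    sub_neg_eq_add]
  congr! 1 <;> (field_simp; constructor <;> intro h <;> linear_combination h)

lemma semaev3_self_eq_zero_iff (h₁ : W.Equation x₁ y₁) (hy : y₁ ≠ W.negY x₁ y₁) :
    semaev3 W.a₄ W.a₆ x₁ x₁ x₃ = 0 ↔ x₃ = W.addX x₁ x₁ (W.slope x₁ x₁ y₁ y₁) := by
  have hy' : 2 * y₁ ≠ 0 := fun h => hy (by rw [negY_of_isShortNF]; linear_combination h)
  rw [semaev3_self x₃ ((equation_iff_of_isShortNF _ _).1 h₁), addX_of_isShortNF,
    slope_self_of_isShortNF hy, eq_comm (a := x₃), sub_sub, sub_eq_iff_eq_add (b := x₁ + x₁),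
    div_pow, div_eq_iff (pow_ne_zero 2 hy')]
  constructor <;> intro h <;> linear_combination h

lemma semaev3_addX_slope_eq_zero (h₁ : W.Equation x₁ y₁) (h₂ : W.Equation x₂ y₂)
    (hxy : ¬(x₁ = x₂ ∧ y₁ = W.negY x₂ y₂)) :
    semaev3 W.a₄ W.a₆ x₁ x₂ (W.addX x₁ x₂ (W.slope x₁ x₂ y₁ y₂)) = 0 := by
  by_cases hx : x₁ = x₂
  · subst hx
    have hy : y₁ ≠ W.negY x₁ y₂ := fun hy => hxy ⟨rfl, hy⟩
    obtain rfl := Y_eq_of_Y_ne h₁ h₂ rfl hy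
    exact (semaev3_self_eq_zero_iff h₁ hy).2 rfl
  · exact (semaev3_eq_zero_iff_of_X_ne h₁ h₂ hx).2 (Or.inl rfl)

lemma exists_eq_addX_slope_of_semaev3_eq_zero (h2 : (2 : F) ≠ 0) (h₁ : W.Nonsingular x₁ y₁)
    (h₂ : W.Nonsingular x₂ y₂) (hf : semaev3 W.a₄ W.a₆ x₁ x₂ x₃ = 0) :
    ∃ y, W.Nonsingular x₂ y ∧ ¬(x₁ = x₂ ∧ y₁ = W.negY x₂ y) ∧
      x₃ = W.addX x₁ x₂ (W.slope x₁ x₂ y₁ y) := by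
  by_cases hx : x₁ = x₂
  · subst hx
    -- at a 2-torsion point `f₃(x₁, x₁, ·)` is the constant `(3x₁² + A)²`, nonzero by nonsingularity
    have hy : y₁ ≠ W.negY x₁ y₁ := by
      intro hy
      obtain rfl : y₁ = 0 := by
        rw [negY_of_isShortNF] at hy
        exact (mul_eq_zero.1 (by linear_combination hy : 2 * y₁ = 0)).resolve_left h2
      have htangent : 3 * x₁ ^ 2 + W.a₄ ≠ 0 := by
        have := ((nonsingular_iff _ _).1 h₁).2.resolve_right (not_not.2 hy)
        simpa [a₁_of_isShortNF, eq_comm] using this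
      rw [semaev3_self x₃ ((equation_iff_of_isShortNF _ _).1 h₁.1)] at hf
      exact htangent (pow_eq_zero_iff two_ne_zero |>.1 (by linear_combination hf))
    exact ⟨y₁, h₁, fun h => hy h.2, (semaev3_self_eq_zero_iff h₁.1 hy).1 hf⟩
  · rcases (semaev3_eq_zero_iff_of_X_ne h₁.1 h₂.1 hx).1 hf with h | h
    · exact ⟨y₂, h₂, fun h => hx h.1, h⟩
    · exact ⟨_, (nonsingular_neg _ _).2 h₂, fun h => hx h.1, h⟩

end WeierstrassCurve.Affine

open Classical in
theorem semaev3_eq_zero_iff_exists_sum_eq_zero_general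
    {K : Type*} [Field K] [IsAlgClosed K]
    (hchar2 : ringChar K ≠ 2)
    (A B : K) (hAB : 4 * A ^ 3 + 27 * B ^ 2 ≠ 0)
    (W : WeierstrassCurve.Affine K) (hW : W = ⟨0, 0, 0, A, B⟩)
    (Z₁ Z₂ Z₃ : K) :
    semaev3 A B Z₁ Z₂ Z₃ = 0 ↔
      ∃ (Y₁ Y₂ Y₃ : K) (h₁ : W.Nonsingular Z₁ Y₁) (h₂ : W.Nonsingular Z₂ Y₂)
        (h₃ : W.Nonsingular Z₃ Y₃),
        Y₁ ^ 2 = Z₁ ^ 3 + A * Z₁ + B ∧ Y₂ ^ 2 = Z₂ ^ 3 + A * Z₂ + B ∧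
        Y₃ ^ 2 = Z₃ ^ 3 + A * Z₃ + B ∧
        Point.some _ _ h₁ + Point.some _ _ h₂ + Point.some _ _ h₃ = (0 : W.Point) := by
  have : W.IsShortNF := by subst hW; exact ⟨rfl, rfl, rfl⟩
  obtain rfl : A = W.a₄ := by rw [hW]
  obtain rfl : B = W.a₆ := by rw [hW]
  have h2 : (2 : K) ≠ 0 := Ring.two_ne_zero hchar2
  have hΔ : W.Δ ≠ 0 := by
    rw [WeierstrassCurve.Δ_of_isShortNF]
    refine mul_ne_zero ?_ hAB
    rw [show (-16 : K) = -2 ^ 4 by norm_num, neg_ne_zero]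
    exact pow_ne_zero 4 h2
  have hcurve {x y : K} (h : W.Nonsingular x y) : y ^ 2 = x ^ 3 + W.a₄ * x + W.a₆ :=
    (equation_iff_of_isShortNF x y).1 h.1
  constructor
  · intro hf
    obtain ⟨Y₁, h₁⟩ := exists_nonsingular_of_isShortNF hΔ Z₁
    obtain ⟨Y₂, h₂⟩ := exists_nonsingular_of_isShortNF hΔ Z₂
    obtain ⟨Y₂, h₂, hxy, rfl⟩ := exists_eq_addX_slope_of_semaev3_eq_zero h2 h₁ h₂ hf
    have h₃ := nonsingular_negAdd h₁ h₂ hxy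
    exact ⟨Y₁, Y₂, _, h₁, h₂, h₃, hcurve h₁, hcurve h₂, hcurve h₃,
      Point.some_add_some_add_some_eq_zero_iff.2 ⟨hxy, rfl, rfl⟩⟩
  · rintro ⟨Y₁, Y₂, Y₃, h₁, h₂, h₃, -, -, -, hsum⟩
    obtain ⟨hxy, rfl, -⟩ := Point.some_add_some_add_some_eq_zero_iff.1 hsum
    exact semaev3_addX_slope_eq_zero h₁.1 h₂.1 hxy

open Classical in
/-- Let `K` be an algebraically closed field of characteristic `≠ 2, 3`, let
`A, B ∈ K` with `4A³ + 27B² ≠ 0`, and let `E : y² = x³ + Ax + B`. For `Z₁, Z₂, Z₃ ∈ K` one has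
`f_3(Z₁, Z₂, Z₃) = 0` iff there exist `Y₁, Y₂, Y₃ ∈ K` with `Yᵢ² = Zᵢ³ + A Zᵢ + B` such that
the points `(Zᵢ, Yᵢ)` lie on `E` and sum to `O` in `E(K)`. -/
theorem semaev3_eq_zero_iff_exists_sum_eq_zero
    {K : Type*} [Field K] [IsAlgClosed K]
    (hchar2 : ringChar K ≠ 2) (hchar3 : ringChar K ≠ 3)
    (A B : K) (hAB : 4 * A ^ 3 + 27 * B ^ 2 ≠ 0)
    (W : WeierstrassCurve.Affine K) (hW : W = ⟨0, 0, 0, A, B⟩)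
    (Z₁ Z₂ Z₃ : K) :
    semaev3 A B Z₁ Z₂ Z₃ = 0 ↔
      ∃ (Y₁ Y₂ Y₃ : K) (h₁ : W.Nonsingular Z₁ Y₁) (h₂ : W.Nonsingular Z₂ Y₂)
        (h₃ : W.Nonsingular Z₃ Y₃),
        Y₁ ^ 2 = Z₁ ^ 3 + A * Z₁ + B ∧ Y₂ ^ 2 = Z₂ ^ 3 + A * Z₂ + B ∧
        Y₃ ^ 2 = Z₃ ^ 3 + A * Z₃ + B ∧
        Point.some _ _ h₁ + Point.some _ _ h₂ + Point.some _ _ h₃ = (0 : W.Point) :=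
  semaev3_eq_zero_iff_exists_sum_eq_zero_general hchar2 A B hAB W hW Z₁ Z₂ Z₃
end
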